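/- arXiv:2304.02435 — 2 statements merged into one kernel-verified Lean document; each statement's English description precedes it below -/
import Mathlib

section
/- Let $(a_t)_{t \geq 0}$, $(\delta_t)_{t \geq 0}$, $(y_t)_{t \geq 0}$ be sequences of nonnegative real numbers and $b > 0$ be a real number. Assume $a_t \leq 1$ for all sufficiently large $t$, $\sum_t a_t = +\infty$, $\sum_t \delta_t < +\infty$, and $y_{t+1} \leq (1 - a_t)^b\, y_t + \delta_t$ for all $t$. Then $\lim_{t \to \infty} y_t = 0$. -/
/-! Eventually `(1 - a t) ^ b ≤ exp (-(b * a t))`, so the discrete Grönwall inequality gives, for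
`N ≤ n` with `N` large, `y n ≤ y N * exp (-b ∑_{N ≤ t < n} a t) + ∑_{N ≤ t < n} δ t`. The
exponential factor tends to `0` because `∑ a = ∞`, and the second term is bounded by a tail of the
convergent series `∑ δ`, which is small once `N` is large. -/

open Filter Finset Real Topology

lemma Real.rpow_one_sub_le_exp_neg_mul {x b : ℝ} (hx : x ≤ 1) (hb : 0 ≤ b) :
    (1 - x) ^ b ≤ exp (-(b * x)) :=
  calc (1 - x) ^ b ≤ exp (-x) ^ b := rpow_le_rpow (by linarith) (one_sub_le_exp_neg x) hb
    _ = exp (-(b * x)) := by rw [← exp_mul]; ring_nf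

lemma Summable.sum_Ico_le_tsum_sub_sum_range {δ : ℕ → ℝ} (hδ0 : ∀ t, 0 ≤ δ t) (hδ : Summable δ)
    {N n : ℕ} (hN : N ≤ n) : ∑ t ∈ Ico N n, δ t ≤ ∑' t, δ t - ∑ t ∈ range N, δ t := by
  rw [sum_Ico_eq_sub δ hN]
  gcongr
  exact hδ.sum_le_tsum _ fun t _ ↦ hδ0 t

lemma Summable.tendsto_tsum_sub_sum_range {δ : ℕ → ℝ} (hδ : Summable δ) :
    Tendsto (fun N ↦ ∑' t, δ t - ∑ t ∈ range N, δ t) atTop (𝓝 0) := by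
  simpa using (tendsto_const_nhds (x := ∑' t, δ t)).sub hδ.hasSum.tendsto_sum_nat

lemma tendsto_exp_neg_sum_Ico_of_not_summable {u : ℕ → ℝ} (hu0 : ∀ t, 0 ≤ u t)
    (hu : ¬ Summable u) (N : ℕ) :
    Tendsto (fun n ↦ exp (-∑ t ∈ Ico N n, u t)) atTop (𝓝 0) := by
  have hsum : Tendsto (fun n ↦ ∑ t ∈ Ico N n, u t) atTop atTop := by
    refine (tendsto_atTop_add_const_right _ (-∑ t ∈ range N, u t)
      ((not_summable_iff_tendsto_nat_atTop_of_nonneg hu0).mp hu)).congr' ?_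
    filter_upwards [eventually_ge_atTop N] with n hn
    rw [sum_Ico_eq_sub u hn, sub_eq_add_neg]
  exact tendsto_exp_atBot.comp (tendsto_neg_atTop_atBot.comp hsum)

lemma le_mul_exp_neg_sum_add_sum_of_le_mul_add {c u δ y : ℕ → ℝ} {N n : ℕ}
    (hc : ∀ t ≥ N, 0 ≤ c t ∧ c t ≤ exp (-u t)) (hu0 : ∀ t, 0 ≤ u t) (hδ0 : ∀ t, 0 ≤ δ t)
    (hyN : 0 ≤ y N) (hrec : ∀ t ≥ N, y (t + 1) ≤ c t * y t + δ t) (hn : N ≤ n) :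
    y n ≤ y N * exp (-∑ t ∈ Ico N n, u t) + ∑ t ∈ Ico N n, δ t := by
  have hprod : ∏ t ∈ Ico N n, c t ≤ exp (-∑ t ∈ Ico N n, u t) := by
    rw [← sum_neg_distrib, exp_sum]
    exact prod_le_prod (fun t ht ↦ (hc t (mem_Ico.mp ht).1).1)
      fun t ht ↦ (hc t (mem_Ico.mp ht).1).2
  have hc1 : ∀ t ≥ N, c t ≤ 1 := fun t ht ↦
    (hc t ht).2.trans (exp_le_one_iff.mpr (neg_nonpos.mpr (hu0 t)))
  have hδsum : ∑ k ∈ Ico N n, δ k * ∏ t ∈ Ico (k + 1) n, c t ≤ ∑ k ∈ Ico N n, δ k :=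
    sum_le_sum fun k hk ↦ mul_le_of_le_one_right (hδ0 k) <|
      prod_le_one (fun t ht ↦ (hc t (by grind)).1) fun t ht ↦ hc1 t (by grind)
  calc y n ≤ y N * ∏ t ∈ Ico N n, c t + ∑ k ∈ Ico N n, δ k * ∏ t ∈ Ico (k + 1) n, c t :=
        discrete_gronwall_prod_general hrec (fun t ht ↦ (hc t ht).1) hn
    _ ≤ _ := by gcongr

theorem tendsto_zero_of_le_mul_add {c u δ y : ℕ → ℝ}
    (hc : ∀ᶠ t in atTop, 0 ≤ c t ∧ c t ≤ exp (-u t)) (hu0 : ∀ t, 0 ≤ u t) (hu : ¬ Summable u)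
    (hδ0 : ∀ t, 0 ≤ δ t) (hδ : Summable δ) (hy0 : ∀ t, 0 ≤ y t)
    (hrec : ∀ t, y (t + 1) ≤ c t * y t + δ t) :
    Tendsto y atTop (𝓝 0) := by
  obtain ⟨N₀, hN₀⟩ := eventually_atTop.mp hc
  refine tendsto_order.2 ⟨fun ε hε ↦ Eventually.of_forall fun n ↦ hε.trans_le (hy0 n),
    fun ε hε ↦ ?_⟩
  obtain ⟨N, hNtail, hN⟩ := ((hδ.tendsto_tsum_sub_sum_range.eventually
    (gt_mem_nhds (half_pos hε))).and (eventually_ge_atTop N₀)).exists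
  have hexp : Tendsto (fun n ↦ y N * exp (-∑ t ∈ Ico N n, u t)) atTop (𝓝 0) := by
    simpa using (tendsto_exp_neg_sum_Ico_of_not_summable hu0 hu N).const_mul (y N)
  filter_upwards [hexp.eventually (gt_mem_nhds (half_pos hε)), eventually_ge_atTop N]
    with n hexpn hn
  have hy := le_mul_exp_neg_sum_add_sum_of_le_mul_add (fun t ht ↦ hN₀ t (hN.trans ht)) hu0 hδ0
    (hy0 N) (fun t _ ↦ hrec t) hn
  linarith [hδ.sum_Ico_le_tsum_sub_sum_range hδ0 hn]

theorem stmt_4 (a δ y : ℕ → ℝ) (b : ℝ) (hb : 0 < b)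
    (ha0 : ∀ t, 0 ≤ a t) (hδ0 : ∀ t, 0 ≤ δ t) (hy0 : ∀ t, 0 ≤ y t)
    (ha1 : ∀ᶠ t in atTop, a t ≤ 1)
    (ha_div : ¬ Summable a)
    (hδ : Summable δ)
    (hrec : ∀ t, y (t + 1) ≤ (1 - a t) ^ b * y t + δ t) :
    Tendsto y atTop (nhds 0) := by
  refine tendsto_zero_of_le_mul_add (u := fun t ↦ b * a t) ?_ (fun t ↦ mul_nonneg hb.le (ha0 t))
    ((summable_mul_left_iff hb.ne').not.mpr ha_div) hδ0 hδ hy0 hrec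
  filter_upwards [ha1] with t ht
  exact ⟨rpow_nonneg (by linarith) b, rpow_one_sub_le_exp_neg_mul ht hb.le⟩
end

section
/- Let $\gamma \in (0,1)$, $\theta > 0$, and define real sequences by $d_0 = 0$, $z_t = \frac{\theta + \gamma d_t}{\theta + t}$ and $d_{t+1} = d_t + z_t$ for $t \geq 0$. Then there exists a constant $L > 0$ such that $d_t / t^{\gamma} \to L$ as $t \to \infty$. -/
open Filter

theorem stmt_15 (γ θ : ℝ) (hγ0 : 0 < γ) (hγ1 : γ < 1) (hθ : 0 < θ)
    (d z : ℕ → ℝ) (hd0 : d 0 = 0)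
    (hz : ∀ t, z t = (θ + γ * d t) / (θ + t))
    (hd : ∀ t, d (t + 1) = d t + z t) :
    ∃ L : ℝ, 0 < L ∧
      Tendsto (fun t : ℕ => d t / (t : ℝ) ^ γ) atTop (nhds L) := by
  set P : ℕ → ℝ := fun t => ∏ s ∈ Finset.range t, ((θ + γ + s) / (θ + s)) with hP
  have hθt : ∀ t : ℕ, (0:ℝ) < θ + t := fun t => by positivity
  -- key recursion solution
  have key : ∀ t, θ + γ * d t = θ * P t := by
    intro t
    induction t with
    | zero => simp [hP, hd0]
    | succ n ih =>
      have hne := (hθt n).ne'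
      rw [hd n, hz n]
      simp only [hP, Finset.prod_range_succ]
      simp only [hP] at ih
      rw [← mul_assoc, ← ih]
      field_simp
      ring
  have hΓθ : 0 < Real.Gamma θ := Real.Gamma_pos_of_pos hθ
  have hΓθγ : 0 < Real.Gamma (θ + γ) := Real.Gamma_pos_of_pos (by linarith)
  refine ⟨θ * Real.Gamma θ / (γ * Real.Gamma (θ + γ)), by positivity, ?_⟩
  rw [← tendsto_add_atTop_iff_nat 1]
  -- the model sequence
  have h1 : Tendsto (fun n : ℕ => Real.GammaSeq θ n / Real.GammaSeq (θ + γ) n)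
      atTop (nhds (Real.Gamma θ / Real.Gamma (θ + γ))) :=
    (Real.GammaSeq_tendsto_Gamma θ).div (Real.GammaSeq_tendsto_Gamma (θ + γ)) hΓθγ.ne'
  have h2 : Tendsto (fun n : ℕ => ((n : ℝ) / ((n : ℝ) + 1)) ^ γ) atTop (nhds 1) := by
    have := (tendsto_natCast_div_add_atTop (1 : ℝ)).rpow_const (p := γ)
      (Or.inl one_ne_zero)
    simpa using this
  have h3 : Tendsto (fun n : ℕ => (((n : ℝ) + 1) ^ γ)⁻¹) atTop (nhds 0) := by
    apply Tendsto.inv_tendsto_atTop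
    exact (tendsto_rpow_atTop hγ0).comp
      (tendsto_atTop_add_const_right atTop (1:ℝ) tendsto_natCast_atTop_atTop)
  have hmodel : Tendsto (fun n : ℕ =>
      θ / γ * (Real.GammaSeq θ n / Real.GammaSeq (θ + γ) n) * ((n : ℝ) / ((n : ℝ) + 1)) ^ γ
        - θ / γ * (((n : ℝ) + 1) ^ γ)⁻¹)
      atTop (nhds (θ * Real.Gamma θ / (γ * Real.Gamma (θ + γ)))) := by
    have := (((tendsto_const_nhds (x := θ / γ)).mul h1).mul h2).sub
      ((tendsto_const_nhds (x := θ / γ)).mul h3)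
    convert this using 2
    field_simp
    simp
  refine hmodel.congr' ?_
  filter_upwards [eventually_ge_atTop 1] with n hn
  have hN : (0:ℝ) < (n:ℝ) := by exact_mod_cast hn
  have hN1 : (0:ℝ) < (n:ℝ) + 1 := by linarith
  have hNγ : (0:ℝ) < (n:ℝ) ^ γ := Real.rpow_pos_of_pos hN γ
  have hN1γ : (0:ℝ) < ((n:ℝ) + 1) ^ γ := Real.rpow_pos_of_pos hN1 γ
  have hfac : (0:ℝ) < (Nat.factorial n : ℝ) := by exact_mod_cast n.factorial_pos
  have hQθ : (0:ℝ) < ∏ j ∈ Finset.range (n + 1), (θ + j) := by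
    apply Finset.prod_pos; intro j _; positivity
  have hQθγ : (0:ℝ) < ∏ j ∈ Finset.range (n + 1), (θ + γ + j) := by
    apply Finset.prod_pos; intro j _; positivity
  -- P as a ratio of products
  have hPratio : P (n + 1) =
      (∏ j ∈ Finset.range (n + 1), (θ + γ + j)) / ∏ j ∈ Finset.range (n + 1), (θ + j) := by
    simp only [hP]
    rw [Finset.prod_div_distrib]
  -- GammaSeq ratio identity
  have hG : Real.GammaSeq θ n / Real.GammaSeq (θ + γ) n = P (n + 1) / (n:ℝ) ^ γ := by
    rw [Real.GammaSeq, Real.GammaSeq, hPratio]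
    rw [div_div_div_eq]
    rw [Real.rpow_add hN θ γ]
    field_simp
  -- value of d (n+1)
  have hdval : d (n + 1) = (θ * P (n + 1) - θ) / γ := by
    have := key (n + 1)
    field_simp
    linarith
  have hcast : ((n + 1 : ℕ) : ℝ) = (n : ℝ) + 1 := by push_cast; ring
  show θ / γ * (Real.GammaSeq θ n / Real.GammaSeq (θ + γ) n) * ((n : ℝ) / ((n : ℝ) + 1)) ^ γ
        - θ / γ * (((n : ℝ) + 1) ^ γ)⁻¹ = d (n + 1) / ((n + 1 : ℕ) : ℝ) ^ γ
  rw [hdval, hG, hcast, Real.div_rpow hN.le hN1.le]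
  field_simp
end
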